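/- Let $p \in L^2(\mathbb{T}^d)$ satisfy $\int_{\mathbb{T}^d} p = 1$ and $\|p\|_{L^2} \le \pi_2$ for some $\pi_2 \ge 1$ (where $\mathbb{T}^d$ has total measure 1). Then for every $\hat{u} \in L^2(\mathbb{T}^d)$ with $(\hat{u},p) = 0$ one has $|(\hat{u},1)| \le (1 - \tfrac{1}{2\pi_2^2})\|\hat{u}\|_{L^2}$, and consequently $\|\hat{u} - (\hat{u},1)\|_{L^2} \ge \tfrac{1}{2\pi_2^2}\|\hat{u}\|_{L^2}$. -/

import Mathlib

open MeasureTheory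

noncomputable section

abbrev Torus (d : ℕ) := Fin d → AddCircle (1 : ℝ)
abbrev L2T (d : ℕ) := Lp ℝ 2 (volume : Measure (Torus d))

def oneL2 (d : ℕ) : L2T d := (memLp_const (1 : ℝ)).toLp _

/-!
Since `(p, 1) = 1`, orthogonality to `p` gives `(û, 1) = (û, 1 - π₂⁻² p)`, and
`‖1 - π₂⁻² p‖² = 1 - 2π₂⁻² + π₂⁻⁴‖p‖² ≤ 1 - π₂⁻² ≤ (1 - 1/(2π₂²))²`; Cauchy–Schwarz gives the
first bound and the triangle inequality `‖û - (û,1)‖ ≥ ‖û‖ - |(û,1)|` the second.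
-/

open scoped RealInnerProductSpace

section InnerProductSpace

variable {E : Type*} [NormedAddCommGroup E] [InnerProductSpace ℝ E]

lemma one_le_norm_of_inner_eq_one {e p : E} (he : ‖e‖ = 1) (hpe : ⟪p, e⟫ = 1) : 1 ≤ ‖p‖ := by
  simpa [hpe, he] using real_inner_le_norm p e

lemma norm_sub_inv_sq_smul_le {e p : E} {π : ℝ} (he : ‖e‖ = 1) (hpe : ⟪p, e⟫ = 1)
    (hp : ‖p‖ ≤ π) : ‖e - (π ^ 2)⁻¹ • p‖ ≤ 1 - 1 / (2 * π ^ 2) := by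
  have hπ : 1 ≤ π := (one_le_norm_of_inner_eq_one he hpe).trans hp
  have hsq : ‖e - (π ^ 2)⁻¹ • p‖ ^ 2 = 1 - 2 * (π ^ 2)⁻¹ + (π ^ 2)⁻¹ ^ 2 * ‖p‖ ^ 2 := by
    rw [norm_sub_sq_real, he, real_inner_smul_right, real_inner_comm, hpe, norm_smul,
      Real.norm_of_nonneg (by positivity)]
    ring
  have hle : ‖e - (π ^ 2)⁻¹ • p‖ ^ 2 ≤ (1 - 1 / (2 * π ^ 2)) ^ 2 := by
    rw [hsq]
    have hp2 : ‖p‖ ^ 2 ≤ π ^ 2 := pow_le_pow_left₀ (norm_nonneg p) hp 2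
    calc 1 - 2 * (π ^ 2)⁻¹ + (π ^ 2)⁻¹ ^ 2 * ‖p‖ ^ 2
        ≤ 1 - 2 * (π ^ 2)⁻¹ + (π ^ 2)⁻¹ ^ 2 * π ^ 2 := by gcongr
      _ ≤ (1 - 1 / (2 * π ^ 2)) ^ 2 := by
        field_simp
        nlinarith
  have hrhs : 0 ≤ 1 - 1 / (2 * π ^ 2) := by
    rw [sub_nonneg, div_le_one (by positivity)]
    nlinarith
  exact (pow_le_pow_iff_left₀ (norm_nonneg _) hrhs two_ne_zero).mp hle

lemma abs_inner_le_of_inner_eq_zero {e p u : E} {π : ℝ} (he : ‖e‖ = 1) (hpe : ⟪p, e⟫ = 1)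
    (hp : ‖p‖ ≤ π) (hu : ⟪u, p⟫ = 0) : |⟪u, e⟫| ≤ (1 - 1 / (2 * π ^ 2)) * ‖u‖ :=
  calc |⟪u, e⟫| = |⟪u, e - (π ^ 2)⁻¹ • p⟫| := by
        rw [inner_sub_right, real_inner_smul_right, hu, mul_zero, sub_zero]
    _ ≤ ‖u‖ * ‖e - (π ^ 2)⁻¹ • p‖ := abs_real_inner_le_norm _ _
    _ ≤ ‖u‖ * (1 - 1 / (2 * π ^ 2)) := by gcongr; exact norm_sub_inv_sq_smul_le he hpe hp
    _ = (1 - 1 / (2 * π ^ 2)) * ‖u‖ := mul_comm _ _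

lemma mul_norm_le_norm_sub_inner_smul {e u : E} {δ : ℝ} (he : ‖e‖ = 1)
    (h : |⟪u, e⟫| ≤ (1 - δ) * ‖u‖) : δ * ‖u‖ ≤ ‖u - ⟪u, e⟫ • e‖ :=
  calc δ * ‖u‖ ≤ ‖u‖ - |⟪u, e⟫| := by linarith
    _ = ‖u‖ - ‖⟪u, e⟫ • e‖ := by rw [norm_smul, he, mul_one, Real.norm_eq_abs]
    _ ≤ ‖u - ⟪u, e⟫ • e‖ := norm_sub_norm_le _ _

end InnerProductSpace

section ProbabilitySpace

variable {α : Type*} [MeasurableSpace α] {μ : Measure α} [IsProbabilityMeasure μ]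

lemma MeasureTheory.L2.norm_const_one : ‖Lp.const 2 μ (1 : ℝ)‖ = 1 := by
  simp [Lp.norm_const]

lemma MeasureTheory.L2.inner_const_one (f : Lp ℝ 2 μ) :
    ⟪f, Lp.const 2 μ (1 : ℝ)⟫ = ∫ x, f x ∂μ := by
  rw [real_inner_comm, ← indicatorConstLp_univ, L2.inner_indicatorConstLp_one, setIntegral_univ]

end ProbabilitySpace

instance (d : ℕ) : IsProbabilityMeasure (volume : Measure (Torus d)) :=
  have : IsProbabilityMeasure (volume : Measure (AddCircle (1 : ℝ))) :=
    ⟨UnitAddCircle.measure_univ⟩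
  inferInstance

lemma norm_oneL2 (d : ℕ) : ‖oneL2 d‖ = 1 := L2.norm_const_one

lemma inner_oneL2 {d : ℕ} (f : L2T d) : ⟪f, oneL2 d⟫ = ∫ ξ, (f : Torus d → ℝ) ξ :=
  L2.inner_const_one f

theorem orthogonal_projection_bound_general (d : ℕ) (π₂ : ℝ)
    (p : L2T d) (hp_mass : ∫ ξ, (p : Torus d → ℝ) ξ = 1) (hp_norm : ‖p‖ ≤ π₂)
    (u : L2T d) (hu : (inner ℝ u p : ℝ) = 0) :
    |(inner ℝ u (oneL2 d) : ℝ)| ≤ (1 - 1 / (2 * π₂ ^ 2)) * ‖u‖ ∧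
    (1 / (2 * π₂ ^ 2)) * ‖u‖ ≤ ‖u - (inner ℝ u (oneL2 d) : ℝ) • oneL2 d‖ := by
  have hpe : ⟪p, oneL2 d⟫ = 1 := (inner_oneL2 p).trans hp_mass
  have hbound := abs_inner_le_of_inner_eq_zero (norm_oneL2 d) hpe hp_norm hu
  exact ⟨hbound, mul_norm_le_norm_sub_inner_smul (norm_oneL2 d) hbound⟩

/-- if `p ∈ L²(𝕋^d)` has `∫ p = 1` and `‖p‖ ≤ π₂` with `π₂ ≥ 1`, then for every
`û ⊥ p` one has `|(û, 1)| ≤ (1 - 1/(2π₂²)) ‖û‖` and hence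
`‖û - (û,1)·1‖ ≥ (2π₂²)⁻¹ ‖û‖`. -/
theorem orthogonal_projection_bound (d : ℕ) (π₂ : ℝ) (hπ₂ : 1 ≤ π₂)
    (p : L2T d) (hp_mass : ∫ ξ, (p : Torus d → ℝ) ξ = 1) (hp_norm : ‖p‖ ≤ π₂)
    (u : L2T d) (hu : (inner ℝ u p : ℝ) = 0) :
    |(inner ℝ u (oneL2 d) : ℝ)| ≤ (1 - 1 / (2 * π₂ ^ 2)) * ‖u‖ ∧
    (1 / (2 * π₂ ^ 2)) * ‖u‖ ≤ ‖u - (inner ℝ u (oneL2 d) : ℝ) • oneL2 d‖ :=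
  orthogonal_projection_bound_general d π₂ p hp_mass hp_norm u hu
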